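/- arXiv:2511.14050 — 5 statements merged into one kernel-verified Lean document; each statement's English description precedes it below -/
import Mathlib

section
/- Let H be a real Hilbert space, S : H → H a bounded linear, self-adjoint, strongly monotone operator, and C : H → H an operator that is β⁻¹-cocoercive with respect to S for some β > 0, i.e., ⟨Cx − Cy, x − y⟩ ≥ β⁻¹‖Cx − Cy‖²_{S⁻¹} for all x, y. Then for all x, y, z ∈ H, ⟨Cx − Cy, z − y⟩ ≥ −(β/4)‖z − x‖²_S. -/
open RealInnerProductSpace

/-- if `C` is `β⁻¹`-cocoercive w.r.t. `S`, then
`⟨Cx − Cy, z − y⟩ ≥ −(β/4)‖z − x‖²_S`. -/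
theorem stmt_2 {H : Type*} [NormedAddCommGroup H] [InnerProductSpace ℝ H] [CompleteSpace H]
    (S Sinv : H →L[ℝ] H) (C : H → H) (β : ℝ) (hβ : 0 < β)
    (hsa : ∀ x y : H, ⟪S x, y⟫ = ⟪x, S y⟫)
    (hsm : ∃ c > 0, ∀ x : H, ⟪S x, x⟫ ≥ c * ‖x‖ ^ 2)
    (hinv1 : ∀ x : H, S (Sinv x) = x) (hinv2 : ∀ x : H, Sinv (S x) = x)
    (hcoco : ∀ x y : H, ⟪C x - C y, x - y⟫ ≥ β⁻¹ * ⟪Sinv (C x - C y), C x - C y⟫) :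
    ∀ x y z : H, ⟪C x - C y, z - y⟫ ≥ -(β / 4) * ⟪S (z - x), z - x⟫ := by
  intro x y z
  set u := C x - C y with hu
  set v := Sinv u with hvdef
  set w := z - x with hw
  obtain ⟨c, hc, hpos⟩ := hsm
  have hv : S v = u := hinv1 u
  -- positivity of ⟨S t, t⟩
  have hpsd : ∀ t : H, (0:ℝ) ≤ ⟪S t, t⟫ := by
    intro t
    have := hpos t
    nlinarith [sq_nonneg ‖t‖, mul_nonneg hc.le (sq_nonneg ‖t‖)]
  have key := hpsd (v + (β/2 : ℝ) • w)
  have hexp : ⟪S (v + (β/2 : ℝ) • w), v + (β/2 : ℝ) • w⟫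
      = ⟪v, u⟫ + β * ⟪u, w⟫ + β ^ 2 / 4 * ⟪S w, w⟫ := by
    have hsw : ⟪S w, v⟫ = ⟪u, w⟫ := by
      rw [hsa, hv, real_inner_comm]
    have hvu : ⟪S v, v⟫ = ⟪v, u⟫ := by rw [hv, real_inner_comm]
    have hvw : ⟪S v, w⟫ = ⟪u, w⟫ := by rw [hv]
    simp only [map_add, map_smul, inner_add_left, inner_add_right,
      real_inner_smul_left, real_inner_smul_right, hsw, hvu, hvw]
    ring
  rw [hexp] at key
  -- cocoercivity
  have hco := hcoco x y
  have hzy : z - y = w + (x - y) := by rw [hw]; abel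
  rw [hzy, inner_add_right]
  rw [← hu, ← hvdef] at hco
  have hcancel := mul_inv_cancel₀ hβ.ne'
  have hco2 := mul_le_mul_of_nonneg_left hco hβ.le
  rw [← mul_assoc, hcancel, one_mul] at hco2
  nlinarith [key, hco2, hβ]
end

section
/- Let H be a real Hilbert space, S : H → H bounded linear, self-adjoint and strongly monotone, γ > 0, and M : H → H an operator such that γM − S is L-Lipschitz continuous with respect to S for some L ∈ [0, 1). Then M is strongly monotone with respect to S: there exists a constant c > 0 such that ⟨Mx − My, x − y⟩ ≥ c‖x − y‖²_S for all x, y ∈ H. In fact one may take c = (1 − L)/γ. -/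
open RealInnerProductSpace

/-- Cauchy–Schwarz for a symmetric nonnegative bilinear form given by `S`. -/
lemma cs_aux {H : Type*} [NormedAddCommGroup H] [InnerProductSpace ℝ H]
    (S : H →L[ℝ] H) (hsa : ∀ x y : H, ⟪S x, y⟫ = ⟪x, S y⟫)
    (hpos : ∀ z : H, (0:ℝ) ≤ ⟪S z, z⟫) (u v : H) :
    ⟪S u, v⟫ ^ 2 ≤ ⟪S u, u⟫ * ⟪S v, v⟫ := by
  have key : ∀ t : ℝ, 0 ≤ ⟪S v, v⟫ * t ^ 2 + (2 * ⟪S u, v⟫) * t + ⟪S u, u⟫ := by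
    intro t
    have h := hpos (u + t • v)
    have hexp : ⟪S (u + t • v), u + t • v⟫
        = ⟪S v, v⟫ * t ^ 2 + (2 * ⟪S u, v⟫) * t + ⟪S u, u⟫ := by
      have hsym : ⟪S v, u⟫ = ⟪S u, v⟫ := by
        rw [hsa v u, real_inner_comm]
      simp [map_add, map_smul, inner_add_left, inner_add_right,
        real_inner_smul_left, real_inner_smul_right, hsym]
      ring
    rw [hexp] at h
    exact h
  have hd : discrim ⟪S v, v⟫ (2 * ⟪S u, v⟫) ⟪S u, u⟫ ≤ 0 := discrim_le_zero fun t => by nlinarith [key t]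
  rw [discrim] at hd
  nlinarith [hd]

/-- if `γM − S` is `L`-Lipschitz w.r.t. `S` with `L ∈ [0,1)`, then `M` is
strongly monotone w.r.t. `S` with constant `(1 − L)/γ`. -/
theorem stmt_4 {H : Type*} [NormedAddCommGroup H] [InnerProductSpace ℝ H] [CompleteSpace H]
    (S Sinv : H →L[ℝ] H) (M : H → H) (γ L : ℝ) (hγ : 0 < γ) (hL0 : 0 ≤ L) (hL1 : L < 1)
    (hsa : ∀ x y : H, ⟪S x, y⟫ = ⟪x, S y⟫)
    (hsm : ∃ c > 0, ∀ x : H, ⟪S x, x⟫ ≥ c * ‖x‖ ^ 2)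
    (hinv1 : ∀ x : H, S (Sinv x) = x) (hinv2 : ∀ x : H, Sinv (S x) = x)
    (hlip : ∀ x y : H,
      Real.sqrt ⟪Sinv ((γ • M x - S x) - (γ • M y - S y)),
          (γ • M x - S x) - (γ • M y - S y)⟫ ≤ L * Real.sqrt ⟪S (x - y), x - y⟫) :
    ∃ c > 0, c = (1 - L) / γ ∧
      ∀ x y : H, ⟪M x - M y, x - y⟫ ≥ c * ⟪S (x - y), x - y⟫ := by
  obtain ⟨c₀, hc₀, hmono⟩ := hsm
  have hpos : ∀ z : H, (0:ℝ) ≤ ⟪S z, z⟫ := fun z =>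
    le_trans (by positivity) (hmono z)
  refine ⟨(1 - L) / γ, div_pos (by linarith) hγ, rfl, ?_⟩
  intro x y
  set d := x - y with hd
  set w := (γ • M x - S x) - (γ • M y - S y) with hw
  have hq : S (Sinv w) = w := hinv1 w
  -- ⟪Sinv w, w⟫ is the S-norm squared of Sinv w
  have hSqq : ⟪S (Sinv w), Sinv w⟫ = ⟪Sinv w, w⟫ := by
    rw [real_inner_comm, hq]
  have ha : (0:ℝ) ≤ ⟪Sinv w, w⟫ := hSqq ▸ hpos (Sinv w)
  have hb : (0:ℝ) ≤ ⟪S d, d⟫ := hpos d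
  -- square the Lipschitz bound
  have hlipsq : ⟪Sinv w, w⟫ ≤ L ^ 2 * ⟪S d, d⟫ := by
    have h := hlip x y
    have h1 : Real.sqrt ⟪Sinv w, w⟫ ≤ L * Real.sqrt ⟪S d, d⟫ := h
    have h2 : ⟪Sinv w, w⟫ = (Real.sqrt ⟪Sinv w, w⟫) ^ 2 := (Real.sq_sqrt ha).symm
    have h3 : (Real.sqrt ⟪S d, d⟫) ^ 2 = ⟪S d, d⟫ := Real.sq_sqrt hb
    nlinarith [Real.sqrt_nonneg (⟪Sinv w, w⟫ : ℝ), Real.sqrt_nonneg (⟪S d, d⟫ : ℝ)]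
  -- Cauchy–Schwarz
  have hcs : ⟪S (Sinv w), d⟫ ^ 2 ≤ ⟪S (Sinv w), Sinv w⟫ * ⟪S d, d⟫ :=
    cs_aux S hsa hpos (Sinv w) d
  rw [hq] at hcs
  have hcs' : ⟪w, d⟫ ^ 2 ≤ ⟪Sinv w, w⟫ * ⟪S d, d⟫ := by
    rwa [real_inner_comm (Sinv w) w] at hcs
  have hwd : ⟪w, d⟫ ≥ -(L * ⟪S d, d⟫) := by
    nlinarith [hcs', hlipsq, mul_nonneg hL0 hb]
  -- combine
  have hid : w + S d = γ • (M x - M y) := by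
    rw [hw, hd, map_sub, smul_sub]
    abel
  have hsplit : γ * ⟪M x - M y, d⟫ = ⟪w, d⟫ + ⟪S d, d⟫ := by
    rw [← real_inner_smul_left, ← hid, inner_add_left]
  have : γ * ⟪M x - M y, d⟫ ≥ (1 - L) * ⟪S d, d⟫ := by
    rw [hsplit]; nlinarith [hwd]
  rw [ge_iff_le, div_mul_eq_mul_div, div_le_iff₀ hγ]
  nlinarith [this]
end

section
/- Let H be a real Hilbert space, S : H → H bounded linear, self-adjoint and strongly monotone, B : H → H monotone, γ > 0, μ ≥ 0, L_{k−1} ≥ 0, and let x_k, x_{k−1}, x*, u_k ∈ H with ‖u_k‖_{S⁻¹} ≤ L_{k−1}‖x_k − x_{k−1}‖_S and ‖Bx_k − Bx_{k−1}‖_{S⁻¹} ≤ μ‖x_k − x_{k−1}‖_S. Define Ψ_k(x*) = ‖x_k − x*‖²_S + 2⟨u_k, x_k − x*⟩ + (γμ + L_{k−1})‖x_k − x_{k−1}‖²_S + 2γ⟨Bx_k − Bx_{k−1}, x* − x_k⟩. Then Ψ_k(x*) ≥ (1 − L_{k−1} − γμ)‖x_k − x*‖²_S. -/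
open RealInnerProductSpace

private lemma s_cs {H : Type*} [NormedAddCommGroup H] [InnerProductSpace ℝ H]
    (S : H →L[ℝ] H) (hsa : ∀ x y : H, ⟪S x, y⟫ = ⟪x, S y⟫)
    (hpos : ∀ x : H, 0 ≤ ⟪S x, x⟫) (x y : H) :
    ⟪S x, y⟫ ^ 2 ≤ ⟪S x, x⟫ * ⟪S y, y⟫ := by
  have key : ∀ t : ℝ, 0 ≤ ⟪S y, y⟫ * (t * t) + (2 * ⟪S x, y⟫) * t + ⟪S x, x⟫ := by
    intro t
    have h := hpos (x + t • y)
    have hsym : ⟪S y, x⟫ = ⟪S x, y⟫ := by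
      rw [hsa, real_inner_comm]
    have heq : ⟪S (x + t • y), x + t • y⟫ =
        ⟪S y, y⟫ * (t * t) + (2 * ⟪S x, y⟫) * t + ⟪S x, x⟫ := by
      simp only [map_add, map_smul, inner_add_left, inner_add_right,
        inner_smul_left, inner_smul_right, RCLike.ofReal_real_eq_id, id_eq, starRingEnd_apply, star_trivial,
        real_inner_smul_left, real_inner_smul_right, hsym]
      ring
    linarith [heq ▸ h]
  have hd := discrim_le_zero key
  rw [discrim] at hd
  nlinarith [hd]

/-- lower bound for the Lyapunov function `Ψ_k(x*)`. -/
theorem stmt_6 {H : Type*} [NormedAddCommGroup H] [InnerProductSpace ℝ H] [CompleteSpace H]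
    (S Sinv : H →L[ℝ] H) (B : H → H) (γ μ Lkm1 : ℝ)
    (hγ : 0 < γ) (hμ : 0 ≤ μ) (hLkm1 : 0 ≤ Lkm1)
    (hsa : ∀ x y : H, ⟪S x, y⟫ = ⟪x, S y⟫)
    (hsm : ∃ c > 0, ∀ x : H, ⟪S x, x⟫ ≥ c * ‖x‖ ^ 2)
    (hinv1 : ∀ x : H, S (Sinv x) = x) (hinv2 : ∀ x : H, Sinv (S x) = x)
    (xk xkm1 xs uk : H)
    (hu : Real.sqrt ⟪Sinv uk, uk⟫ ≤ Lkm1 * Real.sqrt ⟪S (xk - xkm1), xk - xkm1⟫)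
    (hB : Real.sqrt ⟪Sinv (B xk - B xkm1), B xk - B xkm1⟫ ≤
      μ * Real.sqrt ⟪S (xk - xkm1), xk - xkm1⟫) :
    ⟪S (xk - xs), xk - xs⟫ + 2 * ⟪uk, xk - xs⟫ +
        (γ * μ + Lkm1) * ⟪S (xk - xkm1), xk - xkm1⟫ +
        2 * γ * ⟪B xk - B xkm1, xs - xk⟫ ≥
      (1 - Lkm1 - γ * μ) * ⟪S (xk - xs), xk - xs⟫ := by
  obtain ⟨c, hc, hsmc⟩ := hsm
  have hpos : ∀ x : H, 0 ≤ ⟪S x, x⟫ := fun x =>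
    le_trans (by positivity) (hsmc x)
  set e := xk - xs with he
  set d := xk - xkm1 with hd
  set w := B xk - B xkm1 with hw
  -- norms
  set a := Real.sqrt ⟪S e, e⟫ with ha
  set b := Real.sqrt ⟪S d, d⟫ with hb
  have ha2 : a ^ 2 = ⟪S e, e⟫ := Real.sq_sqrt (hpos e)
  have hb2 : b ^ 2 = ⟪S d, d⟫ := Real.sq_sqrt (hpos d)
  have ha0 : 0 ≤ a := Real.sqrt_nonneg _
  have hb0 : 0 ≤ b := Real.sqrt_nonneg _
  -- general fact: |⟪v, e⟫| ≤ √⟪Sinv v, v⟫ * a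
  have bound : ∀ v : H, |⟪v, e⟫| ≤ Real.sqrt ⟪Sinv v, v⟫ * a := by
    intro v
    have h1 : ⟪v, e⟫ = ⟪S (Sinv v), e⟫ := by rw [hinv1]
    have h2 : ⟪S (Sinv v), Sinv v⟫ = ⟪Sinv v, v⟫ := by
      rw [hsa, hinv1]
    have hcs := s_cs S hsa hpos (Sinv v) e
    rw [h2] at hcs
    have h3 : |⟪S (Sinv v), e⟫| ≤ Real.sqrt (⟪Sinv v, v⟫ * ⟪S e, e⟫) := by
      rw [← Real.sqrt_sq_eq_abs]
      exact Real.sqrt_le_sqrt hcs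
    rw [h1]
    calc |⟪S (Sinv v), e⟫| ≤ Real.sqrt (⟪Sinv v, v⟫ * ⟪S e, e⟫) := h3
      _ = Real.sqrt ⟪Sinv v, v⟫ * a := by
          rw [Real.sqrt_mul (by rw [← h2]; exact hpos _)]
  have hu' : |⟪uk, e⟫| ≤ Lkm1 * b * a := by
    refine le_trans (bound uk) ?_
    exact mul_le_mul_of_nonneg_right hu ha0
  have hB' : |⟪w, e⟫| ≤ μ * b * a := by
    refine le_trans (bound w) ?_
    exact mul_le_mul_of_nonneg_right hB ha0
  have hBe : ⟪w, xs - xk⟫ = -⟪w, e⟫ := by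
    rw [he, ← inner_neg_right]
    congr 1
    abel
  have h1 : 2 * ⟪uk, e⟫ ≥ -(Lkm1 * (a ^ 2 + b ^ 2)) := by
    have := abs_le.mp hu'
    nlinarith [sq_nonneg (a - b)]
  have h2 : 2 * γ * ⟪w, xs - xk⟫ ≥ -(γ * μ * (a ^ 2 + b ^ 2)) := by
    rw [hBe]
    have h3 := (abs_le.mp hB').2
    have h4 : 2 * γ * ⟪w, e⟫ ≤ 2 * γ * (μ * b * a) :=
      mul_le_mul_of_nonneg_left h3 (by linarith)
    nlinarith [mul_nonneg (mul_nonneg hγ.le hμ) (sq_nonneg (a - b))]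
  rw [← ha2, ← hb2]
  linarith [h1, h2]
end

section
/- Let H be a real Hilbert space, S : H → H bounded linear, self-adjoint, strongly monotone, B : H → H monotone and μ-Lipschitz with respect to S, and let γ > 0. For points y_k, y_{k−1}, x_k, x_{k−1}, x_{k+1} ∈ H with y_k = 2x_k − x_{k−1} and y_{k−1} = 2x_{k−1} − x_{k−2}, the following holds: 2γ⟨By_k − By_{k−1}, y_k − x_{k+1}⟩ ≤ γμ(√2 + 1)‖x_k − x_{k−1}‖²_S + √2 γμ‖x_{k+1} − y_k‖²_S + γμ‖x_k − y_{k−1}‖²_S. -/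
open RealInnerProductSpace

private lemma sform_expand {H : Type*} [NormedAddCommGroup H] [InnerProductSpace ℝ H]
    (S : H →L[ℝ] H) (hsa : ∀ x y : H, ⟪S x, y⟫ = ⟪x, S y⟫) (u v : H) :
    ⟪S (u + v), u + v⟫ = ⟪S u, u⟫ + 2 * ⟪S u, v⟫ + ⟪S v, v⟫ := by
  have hsym : ⟪S v, u⟫ = ⟪S u, v⟫ := by rw [hsa v u, real_inner_comm]
  have h : S (u + v) = S u + S v := by simp
  rw [h, inner_add_left, inner_add_right, inner_add_right, hsym]
  ring

private lemma sform_cs {H : Type*} [NormedAddCommGroup H] [InnerProductSpace ℝ H]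
    (S : H →L[ℝ] H) (hsa : ∀ x y : H, ⟪S x, y⟫ = ⟪x, S y⟫)
    (hpos : ∀ u : H, 0 ≤ ⟪S u, u⟫) (x y : H) :
    ⟪S x, y⟫ ≤ Real.sqrt ⟪S x, x⟫ * Real.sqrt ⟪S y, y⟫ := by
  have key : ∀ t : ℝ, 0 ≤ ⟪S y, y⟫ * (t * t) + 2 * ⟪S x, y⟫ * t + ⟪S x, x⟫ := by
    intro t
    have h := hpos (x + t • y)
    have hexp := sform_expand S hsa x (t • y)
    have h1 : ⟪S x, t • y⟫ = t * ⟪S x, y⟫ := real_inner_smul_right _ _ _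
    have h2 : ⟪S (t • y), t • y⟫ = t * (t * ⟪S y, y⟫) := by
      have : S (t • y) = t • S y := by simp
      rw [this, real_inner_smul_left, real_inner_smul_right]
    rw [hexp, h1, h2] at h
    nlinarith [h]
  have hd := discrim_le_zero (a := (⟪S y, y⟫ : ℝ)) (b := 2 * ⟪S x, y⟫) (c := (⟪S x, x⟫ : ℝ)) key
  rw [discrim] at hd
  have hsq : ⟪S x, y⟫ ^ 2 ≤ ⟪S x, x⟫ * ⟪S y, y⟫ := by nlinarith [hd]
  calc ⟪S x, y⟫ ≤ |⟪S x, y⟫| := le_abs_self _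
    _ = Real.sqrt (⟪S x, y⟫ ^ 2) := (Real.sqrt_sq_eq_abs _).symm
    _ ≤ Real.sqrt (⟪S x, x⟫ * ⟪S y, y⟫) := Real.sqrt_le_sqrt hsq
    _ = Real.sqrt ⟪S x, x⟫ * Real.sqrt ⟪S y, y⟫ := Real.sqrt_mul (hpos x) _

private lemma sform_tri {H : Type*} [NormedAddCommGroup H] [InnerProductSpace ℝ H]
    (S : H →L[ℝ] H) (hsa : ∀ x y : H, ⟪S x, y⟫ = ⟪x, S y⟫)
    (hpos : ∀ u : H, 0 ≤ ⟪S u, u⟫) (u v : H) :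
    Real.sqrt ⟪S (u + v), u + v⟫ ≤ Real.sqrt ⟪S u, u⟫ + Real.sqrt ⟪S v, v⟫ := by
  have hcs := sform_cs S hsa hpos u v
  have hu : Real.sqrt ⟪S u, u⟫ ^ 2 = ⟪S u, u⟫ := Real.sq_sqrt (hpos u)
  have hv : Real.sqrt ⟪S v, v⟫ ^ 2 = ⟪S v, v⟫ := Real.sq_sqrt (hpos v)
  have hle : ⟪S (u + v), u + v⟫ ≤ (Real.sqrt ⟪S u, u⟫ + Real.sqrt ⟪S v, v⟫) ^ 2 := by
    rw [sform_expand S hsa u v]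
    nlinarith [hcs, hu, hv]
  calc Real.sqrt ⟪S (u + v), u + v⟫
      ≤ Real.sqrt ((Real.sqrt ⟪S u, u⟫ + Real.sqrt ⟪S v, v⟫) ^ 2) := Real.sqrt_le_sqrt hle
    _ = Real.sqrt ⟪S u, u⟫ + Real.sqrt ⟪S v, v⟫ := by
        rw [Real.sqrt_sq (by positivity)]

set_option maxHeartbeats 1600000 in
/-- reflected-term estimate via Cauchy–Schwarz, triangle and weighted
Young inequalities. -/
theorem stmt_11 {H : Type*} [NormedAddCommGroup H] [InnerProductSpace ℝ H] [CompleteSpace H]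
    (S Sinv : H →L[ℝ] H) (B : H → H) (γ μ : ℝ) (hγ : 0 < γ) (hμ : 0 ≤ μ)
    (hsa : ∀ x y : H, ⟪S x, y⟫ = ⟪x, S y⟫)
    (hsm : ∃ c > 0, ∀ x : H, ⟪S x, x⟫ ≥ c * ‖x‖ ^ 2)
    (hinv1 : ∀ x : H, S (Sinv x) = x) (hinv2 : ∀ x : H, Sinv (S x) = x)
    (hBmono : ∀ x y : H, ⟪B x - B y, x - y⟫ ≥ 0)
    (hBlip : ∀ x y : H, Real.sqrt ⟪Sinv (B x - B y), B x - B y⟫ ≤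
      μ * Real.sqrt ⟪S (x - y), x - y⟫)
    (xkm2 xkm1 xk xkp1 yk ykm1 : H)
    (hyk : yk = (2 : ℝ) • xk - xkm1) (hykm1 : ykm1 = (2 : ℝ) • xkm1 - xkm2) :
    2 * γ * ⟪B yk - B ykm1, yk - xkp1⟫ ≤
      γ * μ * (Real.sqrt 2 + 1) * ⟪S (xk - xkm1), xk - xkm1⟫ +
        Real.sqrt 2 * γ * μ * ⟪S (xkp1 - yk), xkp1 - yk⟫ +
        γ * μ * ⟪S (xk - ykm1), xk - ykm1⟫ := by
  obtain ⟨c, hc, hsm⟩ := hsm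
  have hpos : ∀ u : H, 0 ≤ ⟪S u, u⟫ := fun u => le_trans (by positivity) (hsm u)
  set a := B yk - B ykm1 with ha
  -- abbreviations
  set p := Real.sqrt ⟪S (xk - xkm1), xk - xkm1⟫ with hp
  set q := Real.sqrt ⟪S (xk - ykm1), xk - ykm1⟫ with hq
  set r := Real.sqrt ⟪S (xkp1 - yk), xkp1 - yk⟫ with hr
  have hp0 : 0 ≤ p := Real.sqrt_nonneg _
  have hq0 : 0 ≤ q := Real.sqrt_nonneg _
  have hr0 : 0 ≤ r := Real.sqrt_nonneg _
  have hp2 : p ^ 2 = ⟪S (xk - xkm1), xk - xkm1⟫ := Real.sq_sqrt (hpos _)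
  have hq2 : q ^ 2 = ⟪S (xk - ykm1), xk - ykm1⟫ := Real.sq_sqrt (hpos _)
  have hr2 : r ^ 2 = ⟪S (xkp1 - yk), xkp1 - yk⟫ := Real.sq_sqrt (hpos _)
  -- step 1: Cauchy-Schwarz in the S inner product
  have hCS : ⟪a, yk - xkp1⟫ ≤
      Real.sqrt ⟪Sinv a, a⟫ * Real.sqrt ⟪S (yk - xkp1), yk - xkp1⟫ := by
    have h1 : ⟪a, yk - xkp1⟫ = ⟪S (Sinv a), yk - xkp1⟫ := by rw [hinv1]
    have h2 : ⟪S (Sinv a), Sinv a⟫ = ⟪Sinv a, a⟫ := by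
      rw [hinv1]; exact real_inner_comm _ _
    rw [h1, ← h2]
    exact sform_cs S hsa hpos (Sinv a) (yk - xkp1)
  -- the S-norm of yk - xkp1 equals that of xkp1 - yk
  have hflip : ⟪S (yk - xkp1), yk - xkp1⟫ = ⟪S (xkp1 - yk), xkp1 - yk⟫ := by
    have h : yk - xkp1 = -(xkp1 - yk) := by abel
    rw [h, map_neg, inner_neg_neg]
  -- step 2: Lipschitz bound
  have hlip := hBlip yk ykm1
  -- step 3: triangle inequality
  have hdecomp : yk - ykm1 = (xk - xkm1) + (xk - ykm1) := by
    rw [hyk, two_smul]; abel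
  have htri : Real.sqrt ⟪S (yk - ykm1), yk - ykm1⟫ ≤ p + q := by
    rw [hdecomp]
    exact sform_tri S hsa hpos _ _
  -- combine
  have hchain : ⟪a, yk - xkp1⟫ ≤ μ * (p + q) * r := by
    have h1 : Real.sqrt ⟪Sinv a, a⟫ ≤ μ * (p + q) := by
      refine hlip.trans ?_
      have := mul_le_mul_of_nonneg_left htri hμ
      linarith
    calc ⟪a, yk - xkp1⟫ ≤ Real.sqrt ⟪Sinv a, a⟫ * Real.sqrt ⟪S (yk - xkp1), yk - xkp1⟫ := hCS
      _ = Real.sqrt ⟪Sinv a, a⟫ * r := by rw [hr, hflip]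
      _ ≤ μ * (p + q) * r :=
          mul_le_mul_of_nonneg_right h1 hr0
  -- final algebra with weighted Young inequalities
  have hs2 : Real.sqrt 2 ^ 2 = 2 := Real.sq_sqrt (by norm_num)
  have hs0 : (1 : ℝ) ≤ Real.sqrt 2 := by
    nlinarith [Real.sqrt_nonneg 2, hs2]
  rw [← hp2, ← hq2, ← hr2]
  have hy1 : 2 * (p * r) ≤ (Real.sqrt 2 + 1) * p ^ 2 + (Real.sqrt 2 - 1) * r ^ 2 := by
    have hid : (Real.sqrt 2 + 1) * p ^ 2 + (Real.sqrt 2 - 1) * r ^ 2 - 2 * (p * r) =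
        (Real.sqrt 2 + 1) * (p - (Real.sqrt 2 - 1) * r) ^ 2 := by
      linear_combination (2 * p * r - (Real.sqrt 2 - 1) * r ^ 2) * hs2
    nlinarith [mul_nonneg (by linarith : (0:ℝ) ≤ Real.sqrt 2 + 1)
      (sq_nonneg (p - (Real.sqrt 2 - 1) * r)), hid]
  have hy2 : 2 * (q * r) ≤ q ^ 2 + r ^ 2 := by nlinarith [sq_nonneg (q - r)]
  have hgm : 0 ≤ γ * μ := mul_nonneg hγ.le hμ
  nlinarith [mul_le_mul_of_nonneg_left hchain (by linarith : (0:ℝ) ≤ 2 * γ),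
    mul_le_mul_of_nonneg_left hy1 hgm, mul_le_mul_of_nonneg_left hy2 hgm]
end

section
/- Let H be a real Hilbert space, S : H → H bounded linear, self-adjoint, strongly monotone, B : H → H monotone and μ-Lipschitz with respect to S, and γ, ε₅ > 0. Then for all x_{k−1}, x_k, x_{k+1}, y_k, x* ∈ H: −2γ⟨Bx_k − Bx*, y_k − x*⟩ − 2γ⟨x_{k+1} − x*, Bx_k − Bx_{k−1}⟩ − γ²‖Bx_k − Bx_{k−1}‖²_{S⁻¹} ≤ −2γ⟨Bx_k − Bx*, x_{k+1} − x*⟩ + 2γ⟨Bx_{k−1} − Bx*, x_k − x*⟩ + γ²‖Bx_{k−1} − Bx*‖²_{S⁻¹} − γ²‖Bx_k − Bx*‖²_{S⁻¹} + γε₅μ²‖x_k − x_{k−1}‖²_S + (γ/ε₅)‖y_k − x_k‖²_S, provided y_k − x* = (x_{k+1} − x*) + γS⁻¹(Bx_k − Bx_{k−1}). -/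
open RealInnerProductSpace

/-- main estimate for the outer reflected forward-backward analysis. -/
theorem stmt_14 {H : Type*} [NormedAddCommGroup H] [InnerProductSpace ℝ H] [CompleteSpace H]
    (S Sinv : H →L[ℝ] H) (B : H → H) (γ μ ε₅ : ℝ) (hγ : 0 < γ) (hμ : 0 ≤ μ) (hε₅ : 0 < ε₅)
    (hsa : ∀ x y : H, ⟪S x, y⟫ = ⟪x, S y⟫)
    (hsm : ∃ c > 0, ∀ x : H, ⟪S x, x⟫ ≥ c * ‖x‖ ^ 2)
    (hinv1 : ∀ x : H, S (Sinv x) = x) (hinv2 : ∀ x : H, Sinv (S x) = x)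
    (hBmono : ∀ x y : H, ⟪B x - B y, x - y⟫ ≥ 0)
    (hBlip : ∀ x y : H, Real.sqrt ⟪Sinv (B x - B y), B x - B y⟫ ≤
      μ * Real.sqrt ⟪S (x - y), x - y⟫)
    (xkm1 xk xkp1 yk xs : H)
    (hrel : yk - xs = (xkp1 - xs) + γ • Sinv (B xk - B xkm1)) :
    -(2 * γ) * ⟪B xk - B xs, yk - xs⟫ - 2 * γ * ⟪xkp1 - xs, B xk - B xkm1⟫ -
        γ ^ 2 * ⟪Sinv (B xk - B xkm1), B xk - B xkm1⟫ ≤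
      -(2 * γ) * ⟪B xk - B xs, xkp1 - xs⟫ + 2 * γ * ⟪B xkm1 - B xs, xk - xs⟫ +
        γ ^ 2 * ⟪Sinv (B xkm1 - B xs), B xkm1 - B xs⟫ -
        γ ^ 2 * ⟪Sinv (B xk - B xs), B xk - B xs⟫ +
        γ * ε₅ * μ ^ 2 * ⟪S (xk - xkm1), xk - xkm1⟫ +
        (γ / ε₅) * ⟪S (yk - xk), yk - xk⟫ := by
  obtain ⟨c, hc, hsm'⟩ := hsm
  have spos : ∀ u : H, (0:ℝ) ≤ ⟪S u, u⟫ := fun u =>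
    le_trans (by positivity) (hsm' u)
  have ssym : ∀ u v : H, ⟪Sinv u, v⟫ = ⟪u, Sinv v⟫ := by
    intro u v
    calc ⟪Sinv u, v⟫ = ⟪Sinv u, S (Sinv v)⟫ := by rw [hinv1]
    _ = ⟪S (Sinv u), Sinv v⟫ := (hsa _ _).symm
    _ = ⟪u, Sinv v⟫ := by rw [hinv1]
  set a := B xk - B xs with ha
  set b := B xkm1 - B xs with hb
  have hd : B xk - B xkm1 = a - b := by rw [ha, hb]; abel
  rw [hd] at hrel ⊢
  set d := a - b with hdd
  set u := yk - xk with hu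
  set Δ := xk - xkm1 with hΔ
  -- Q(d) ≥ 0
  have hQd_nonneg : (0:ℝ) ≤ ⟪Sinv d, d⟫ := by
    have h := spos (Sinv d)
    rw [hinv1] at h
    rwa [real_inner_comm] at h
  have hSΔ : (0:ℝ) ≤ ⟪S Δ, Δ⟫ := spos Δ
  -- Lipschitz squared
  have hQd_le : ⟪Sinv d, d⟫ ≤ μ ^ 2 * ⟪S Δ, Δ⟫ := by
    have h1 := hBlip xk xkm1
    rw [hd] at h1
    have h2 : Real.sqrt ⟪Sinv d, d⟫ ^ 2 ≤ (μ * Real.sqrt ⟪S Δ, Δ⟫) ^ 2 :=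
      pow_le_pow_left₀ (Real.sqrt_nonneg _) h1 2
    rwa [Real.sq_sqrt hQd_nonneg, mul_pow, Real.sq_sqrt hSΔ] at h2
  -- Young's inequality: -2⟪u,d⟫ ≤ (1/ε₅)⟪Su,u⟫ + ε₅ Q(d)
  have hyoung : -(2 * ⟪u, d⟫) ≤ (1/ε₅) * ⟪S u, u⟫ + ε₅ * ⟪Sinv d, d⟫ := by
    have h0 := spos (u + ε₅ • Sinv d)
    have hexp : ⟪S (u + ε₅ • Sinv d), u + ε₅ • Sinv d⟫
        = ⟪S u, u⟫ + 2 * ε₅ * ⟪u, d⟫ + ε₅ ^ 2 * ⟪Sinv d, d⟫ := by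
      have e1 : ⟪S u, Sinv d⟫ = ⟪u, d⟫ := by rw [hsa, hinv1]
      have e2 : ⟪S (Sinv d), u⟫ = ⟪u, d⟫ := by
        rw [hinv1, real_inner_comm]
      have e3 : ⟪S (Sinv d), Sinv d⟫ = ⟪Sinv d, d⟫ := by
        rw [hinv1, real_inner_comm]
      simp only [map_add, map_smul, inner_add_left, inner_add_right,
        inner_smul_left, inner_smul_right, RCLike.ofReal_real_eq_id, id_eq,
        conj_trivial, e1, e2, e3]
      ring
    rw [hexp] at h0
    have h1 : 0 ≤ (1/ε₅) * (⟪S u, u⟫ + 2 * ε₅ * ⟪u, d⟫ + ε₅ ^ 2 * ⟪Sinv d, d⟫) := by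
      positivity
    have : (1/ε₅) * (⟪S u, u⟫ + 2 * ε₅ * ⟪u, d⟫ + ε₅ ^ 2 * ⟪Sinv d, d⟫)
        = (1/ε₅) * ⟪S u, u⟫ + 2 * ⟪u, d⟫ + ε₅ * ⟪Sinv d, d⟫ := by
      field_simp
    linarith [h1, this ▸ h1]
  -- monotonicity
  have hmono : (0:ℝ) ≤ ⟪a, xk - xs⟫ := hBmono xk xs
  -- linear identities
  have E1 : ⟪a, yk - xs⟫ = ⟪a, xkp1 - xs⟫ + γ * ⟪a, Sinv d⟫ := by
    rw [hrel, inner_add_right, real_inner_smul_right]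
  have E2 : ⟪xkp1 - xs, d⟫ = ⟪yk - xs, d⟫ - γ * ⟪Sinv d, d⟫ := by
    have : xkp1 - xs = (yk - xs) - γ • Sinv d := by rw [hrel]; abel
    rw [this, inner_sub_left, real_inner_smul_left]
  have E3 : ⟪yk - xs, d⟫ = ⟪u, d⟫ + ⟪xk - xs, d⟫ := by
    have : yk - xs = u + (xk - xs) := by rw [hu]; abel
    rw [this, inner_add_left]
  have E4 : ⟪xk - xs, d⟫ = ⟪xk - xs, a⟫ - ⟪xk - xs, b⟫ := by
    rw [hdd, inner_sub_right]
  have csym : ⟪Sinv b, a⟫ = ⟪Sinv a, b⟫ := by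
    rw [ssym, real_inner_comm]
  have E5 : ⟪Sinv d, d⟫ = ⟪Sinv a, a⟫ - 2 * ⟪Sinv a, b⟫ + ⟪Sinv b, b⟫ := by
    rw [hdd]
    simp only [map_sub, inner_sub_left, inner_sub_right, csym]
    ring
  have E6 : ⟪a, Sinv d⟫ = ⟪Sinv a, a⟫ - ⟪Sinv a, b⟫ := by
    rw [real_inner_comm, hdd, map_sub, inner_sub_left, csym, real_inner_comm a]
    -- goal: ⟪Sinv a, a⟫ - ⟪Sinv a, b⟫ = ⟪Sinv a, a⟫ - ⟪Sinv a, b⟫ ?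
  have E7 : ⟪b, xk - xs⟫ = ⟪xk - xs, b⟫ := real_inner_comm _ _
  have E8 : ⟪a, xk - xs⟫ = ⟪xk - xs, a⟫ := real_inner_comm _ _
  -- scaled inequalities
  have s1 : 0 ≤ 2 * γ * ⟪xk - xs, a⟫ := by
    rw [← E8]; positivity
  have s2 : γ * (-(2 * ⟪u, d⟫)) ≤ γ * ((1/ε₅) * ⟪S u, u⟫ + ε₅ * ⟪Sinv d, d⟫) :=
    mul_le_mul_of_nonneg_left hyoung hγ.le
  have s2' : -(2 * γ * ⟪u, d⟫) ≤ γ / ε₅ * ⟪S u, u⟫ + γ * ε₅ * ⟪Sinv d, d⟫ := by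
    have e : γ * ((1/ε₅) * ⟪S u, u⟫ + ε₅ * ⟪Sinv d, d⟫)
        = γ / ε₅ * ⟪S u, u⟫ + γ * ε₅ * ⟪Sinv d, d⟫ := by ring
    have e2 : γ * (-(2 * ⟪u, d⟫)) = -(2 * γ * ⟪u, d⟫) := by ring
    rw [e, e2] at s2; exact s2
  have s3 : γ * ε₅ * ⟪Sinv d, d⟫ ≤ γ * ε₅ * μ ^ 2 * ⟪S Δ, Δ⟫ := by
    have := mul_le_mul_of_nonneg_left hQd_le (by positivity : (0:ℝ) ≤ γ * ε₅)
    linarith [this]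
  rw [E1, E2, E3, E4, E5, E6, E7]
  linarith [s1, s2', s3]
end
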